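/- Let n ≥ 2, p > 1, and let T : C_e^∞(S^{n-1}) → C_e^∞(S^{n-1}) be a linear operator. Suppose f ∈ C_e^∞(S^{n-1}) is positive and f^{p-1} is positively associated with T, i.e., for every h ∈ C_e^∞(S^{n-1}) with Th(x) ≥ 0 for all x ∈ S^{n-1} one has ∫_{S^{n-1}} h(x) f^{p-1}(x) dx ≥ 0. If g ∈ C_e^∞(S^{n-1}) is positive and Tf(x) ≤ Tg(x) for every x ∈ S^{n-1}, then ‖f‖_{L_p(S^{n-1})} ≤ ‖g‖_{L_p(S^{n-1})}. -/

import Mathlib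

open MeasureTheory Real
open scoped RealInnerProductSpace ComplexOrder

noncomputable section

abbrev Euc (n : ℕ) := EuclideanSpace ℝ (Fin n)
abbrev Sph (n : ℕ) := Metric.sphere (0 : Euc n) 1

/-- The surface measure on the unit sphere `S^{n-1}`. -/
def sphμ (n : ℕ) : Measure (Sph n) := (volume : Measure (Euc n)).toSphere

/-- Radial projection of a nonzero vector to the unit sphere. -/
def sphProj {n : ℕ} (x : Euc n) (hx : x ≠ 0) : Sph n :=
  ⟨‖x‖⁻¹ • x, by
    rw [mem_sphere_zero_iff_norm, norm_smul, norm_inv, norm_norm,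
      inv_mul_cancel₀ (norm_ne_zero_iff.mpr hx)]⟩

/-- The homogeneous of degree `s` extension of a function on the sphere:
`x ↦ h(x/|x|₂)·|x|₂^s` (with junk value `0` at the origin). -/
def homExt {n : ℕ} (h : Sph n → ℝ) (s : ℝ) (x : Euc n) : ℝ :=
  letI := Classical.decEq (Euc n)
  if hx : x = 0 then 0 else h (sphProj x hx) * ‖x‖ ^ s

/-- A function on the sphere is infinitely differentiable iff its `0`-homogeneous
extension is `C^∞` away from the origin. -/
def SphSmooth {n : ℕ} (h : Sph n → ℝ) : Prop :=
  ContDiffOn ℝ (⊤ : ℕ∞) (homExt h 0) {x : Euc n | x ≠ 0}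

/-- A function on the sphere is even. -/
def SphEven {n : ℕ} (h : Sph n → ℝ) : Prop := ∀ x : Sph n, h (-x) = h x

/-- The `L_p` norm on the sphere. -/
def sphLp {n : ℕ} (p : ℝ) (f : Sph n → ℝ) : ℝ :=
  (∫ x, |f x| ^ p ∂ sphμ n) ^ (1 / p)

/-- The Fourier transform with the convention `φ̂(x) = ∫ φ(ξ) e^{-i⟨x,ξ⟩} dξ`. -/
def ftP {n : ℕ} (φ : Euc n → ℝ) (x : Euc n) : ℂ :=
  ∫ ξ : Euc n, (φ ξ : ℂ) * Complex.exp (-(Complex.I * (⟪x, ξ⟫ : ℂ)))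

/-- The pairing `⟨h·r^s, φ⟩ = ∫ h(x/|x|₂)|x|₂^s φ(x) dx` of the tempered distribution
`h·r^s` with a complex-valued function. -/
def rpowPairC {n : ℕ} (h : Sph n → ℝ) (s : ℝ) (φ : Euc n → ℂ) : ℂ :=
  ∫ x : Euc n, (homExt h s x : ℂ) * φ x

/-- Real version of the pairing `⟨h·r^s, φ⟩`. -/
def rpowPairR {n : ℕ} (h : Sph n → ℝ) (s : ℝ) (φ : Euc n → ℝ) : ℝ :=
  ∫ x : Euc n, homExt h s x * φ x

/-- The Fourier transform of the tempered distribution `c • h·r^s` is positive on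
`ℝⁿ \ {0}`: it is `≥ 0` on every nonnegative Schwartz function supported in `ℝⁿ \ {0}`. -/
def FTPosAwayZero {n : ℕ} (c : ℝ) (h : Sph n → ℝ) (s : ℝ) : Prop :=
  ∀ φ : SchwartzMap (Euc n) ℝ, (∀ x, 0 ≤ φ x) → tsupport ⇑φ ⊆ {(0 : Euc n)}ᶜ →
    0 ≤ (c : ℂ) * rpowPairC h s (ftP ⇑φ)

/-- The tempered distribution `h·r^s` is positive definite: its Fourier transform is `≥ 0`
on every nonnegative even Schwartz function. -/
def IsPosDefDist {n : ℕ} (h : Sph n → ℝ) (s : ℝ) : Prop :=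
  ∀ φ : SchwartzMap (Euc n) ℝ, (∀ x, 0 ≤ φ x) → (∀ x, φ (-x) = φ x) →
    0 ≤ rpowPairC h s (ftP ⇑φ)

/-- The `q`-cosine transform `C_q f(ξ) = ∫_{S^{n-1}} |⟨x,ξ⟩|^q f(x) dx`. -/
def cosT {n : ℕ} (q : ℝ) (f : Sph n → ℝ) (ξ : Euc n) : ℝ :=
  ∫ x, |⟪(x : Euc n), ξ⟫| ^ q * f x ∂ sphμ n

lemma sphSmooth_continuous {n : ℕ} {h : Sph n → ℝ} (hs : SphSmooth h) :
    Continuous h := by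
  have hne : ∀ x : Sph n, (x : Euc n) ≠ 0 := by
    intro x hx0
    have := mem_sphere_zero_iff_norm.mp x.2
    rw [hx0, norm_zero] at this
    norm_num at this
  have key : ∀ x : Sph n, homExt h 0 (x : Euc n) = h x := by
    intro x
    have hnorm : ‖(x : Euc n)‖ = 1 := mem_sphere_zero_iff_norm.mp x.2
    rw [homExt, dif_neg (hne x)]
    have : sphProj (x : Euc n) (hne x) = x := by
      apply Subtype.ext
      simp [sphProj, hnorm]
    rw [this, Real.rpow_zero, mul_one]
  have : Continuous fun x : Sph n => homExt h 0 (x : Euc n) := by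
    apply (hs.continuousOn).comp_continuous continuous_subtype_val
    intro x; exact hne x
  exact this.congr key

/-- If `f^{p-1}` is positively associated with the linear operator `T`, and
`Tf ≤ Tg` pointwise, then `‖f‖_p ≤ ‖g‖_p`. -/
theorem stmt_0 {n : ℕ} (hn : 2 ≤ n) {p : ℝ} (hp : 1 < p)
    (T : (Sph n → ℝ) →ₗ[ℝ] (Sph n → ℝ))
    (hT : ∀ u : Sph n → ℝ, SphSmooth u → SphEven u → SphSmooth (T u) ∧ SphEven (T u))
    (f : Sph n → ℝ) (hfs : SphSmooth f) (hfe : SphEven f) (hfpos : ∀ x, 0 ≤ f x)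
    (hassoc : ∀ h : Sph n → ℝ, SphSmooth h → SphEven h → (∀ x, 0 ≤ T h x) →
      0 ≤ ∫ x, h x * f x ^ (p - 1) ∂ sphμ n)
    (g : Sph n → ℝ) (hgs : SphSmooth g) (hge : SphEven g) (hgpos : ∀ x, 0 ≤ g x)
    (hle : ∀ x, T f x ≤ T g x) :
    sphLp p f ≤ sphLp p g := by
  classical
  have hμfin : IsFiniteMeasure (sphμ n) := by unfold sphμ; infer_instance
  have hfc : Continuous f := sphSmooth_continuous hfs
  have hgc : Continuous g := sphSmooth_continuous hgs
  have hp0 : (0:ℝ) < p := by linarith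
  set q : ℝ := p / (p - 1) with hq
  have hpq : p.HolderConjugate q := by
    rw [Real.holderConjugate_iff]
    constructor
    · exact hp
    · rw [hq]; field_simp; ring
  have hfp1c : Continuous fun x => f x ^ (p - 1) :=
    hfc.rpow_const fun x => Or.inr (by linarith)
  have hmem : ∀ (u : Sph n → ℝ), Continuous u → ∀ r : ℝ,
      MemLp u (ENNReal.ofReal r) (sphμ n) := by
    intro u hu r
    obtain ⟨C, hC⟩ := (isCompact_univ (X := Sph n)).exists_bound_of_continuousOn
      hu.continuousOn
    exact MemLp.of_bound hu.aestronglyMeasurable C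
      (Filter.Eventually.of_forall fun x => hC x trivial)
  have hint : ∀ (u : Sph n → ℝ), Continuous u → Integrable u (sphμ n) := by
    intro u hu
    have := hmem u hu 1
    rwa [ENNReal.ofReal_one, memLp_one_iff_integrable] at this
  -- Step 1: apply positive association to g - f
  have hsub_smooth : SphSmooth (g - f) := by
    have heq : homExt (g - f) 0 = fun x => homExt g 0 x - homExt f 0 x := by
      funext x
      by_cases hx : x = 0
      · simp [homExt, hx]
      · simp [homExt, hx, Pi.sub_apply, sub_mul]
    unfold SphSmooth
    rw [heq]
    exact hgs.sub hfs
  have hsub_even : SphEven (g - f) := by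
    intro x; simp [Pi.sub_apply, hge x, hfe x]
  have hTpos : ∀ x, 0 ≤ T (g - f) x := by
    intro x
    have hTsub : T (g - f) = T g - T f := map_sub T g f
    rw [hTsub, Pi.sub_apply]
    exact sub_nonneg.mpr (hle x)
  have hstep := hassoc (g - f) hsub_smooth hsub_even hTpos
  have hint_g : Integrable (fun x => g x * f x ^ (p - 1)) (sphμ n) :=
    hint _ (hgc.mul hfp1c)
  have hint_f : Integrable (fun x => f x * f x ^ (p - 1)) (sphμ n) :=
    hint _ (hfc.mul hfp1c)
  have hsplit : ∫ x, (g - f) x * f x ^ (p - 1) ∂ sphμ n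
      = (∫ x, g x * f x ^ (p - 1) ∂ sphμ n) - ∫ x, f x * f x ^ (p - 1) ∂ sphμ n := by
    rw [← integral_sub hint_g hint_f]
    congr 1; funext x; simp [Pi.sub_apply, sub_mul]
  have hffp : (∫ x, f x * f x ^ (p - 1) ∂ sphμ n) = ∫ x, f x ^ p ∂ sphμ n := by
    congr 1; funext x
    rw [show p = 1 + (p - 1) by ring, Real.rpow_add' (hfpos x) (by intro h; linarith),
      Real.rpow_one]
    ring_nf
  have step1 : ∫ x, f x ^ p ∂ sphμ n ≤ ∫ x, g x * f x ^ (p - 1) ∂ sphμ n := by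
    rw [hsplit, hffp] at hstep
    linarith
  -- Step 2: Hölder
  have holder := integral_mul_le_Lp_mul_Lq_of_nonneg hpq
    (μ := sphμ n) (f := g) (g := fun x => f x ^ (p - 1))
    (Filter.Eventually.of_forall hgpos)
    (Filter.Eventually.of_forall fun x => Real.rpow_nonneg (hfpos x) _)
    (hmem g hgc p) (hmem _ hfp1c q)
  have hfpq : (∫ x, (f x ^ (p - 1)) ^ q ∂ sphμ n) = ∫ x, f x ^ p ∂ sphμ n := by
    congr 1; funext x
    rw [← Real.rpow_mul (hfpos x)]
    have hp1 : p - 1 ≠ 0 := by intro h; linarith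
    congr 1
    rw [hq]; field_simp
  rw [hfpq] at holder
  set A := ∫ x, f x ^ p ∂ sphμ n with hA
  set B := ∫ x, g x ^ p ∂ sphμ n with hB
  have hA0 : 0 ≤ A := integral_nonneg fun x => Real.rpow_nonneg (hfpos x) _
  have hB0 : 0 ≤ B := integral_nonneg fun x => Real.rpow_nonneg (hgpos x) _
  have key : A ≤ B ^ (1/p) * A ^ (1/q) := le_trans step1 holder
  have hLpf : sphLp p f = A ^ (1/p) := by
    unfold sphLp
    congr 1
    rw [hA]
    congr 1; funext x; rw [abs_of_nonneg (hfpos x)]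
  have hLpg : sphLp p g = B ^ (1/p) := by
    unfold sphLp
    congr 1
    rw [hB]
    congr 1; funext x; rw [abs_of_nonneg (hgpos x)]
  rw [hLpf, hLpg]
  rcases eq_or_lt_of_le hA0 with hA0' | hApos
  · rw [← hA0', Real.zero_rpow (by positivity)]
    exact Real.rpow_nonneg hB0 _
  · have hsum : 1/p + 1/q = 1 := by
      rw [one_div, one_div]; exact hpq.inv_add_inv_eq_one
    have hAeq : A = A ^ (1/p) * A ^ (1/q) := by
      rw [← Real.rpow_add hApos, hsum, Real.rpow_one]
    nth_rewrite 1 [hAeq] at key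
    have hAq : 0 < A ^ (1/q) := Real.rpow_pos_of_pos hApos _
    exact le_of_mul_le_mul_right key hAq
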